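/- arXiv:math/0304328 — 2 statements merged into one kernel-verified Lean document; each statement's English description precedes it below -/
import Mathlib

section
/- Let g be a finite-dimensional real quadratic Lie algebra and C ∈ Cl(g) its cubic element. Define the odd operator δ on the ℤ₂-graded Clifford algebra Cl(g) by δ(x) = C·x − (−1)^{|x|}·x·C for x homogeneous of parity |x| ∈ {0,1}, extended linearly. Then δ is a differential: δ(δ(x)) = 0 for every x ∈ Cl(g). -/
/-!
For homogeneous `x`, `δ (δ x) = C² x - x C²`, so it suffices that `C²` commutes with every
generator `v`. The anticommutator `T_v = C v + v C` is quadratic and satisfies `⁅T_v, w⁆ = ⁅w, v⁆`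
on generators, hence `C² v - v C² = -⁅T_v, C⁆`. Finally `⁅t, C⁆ = 0` whenever `⁅t, ·⁆` acts on
generators by a `B`-skew derivation `A` of `g`: writing `C = (1/6) ∑ ⁅e_b, e_c⁆ e^b e^c` and
splitting `A ⁅e_b, e_c⁆` by the derivation rule, the terms pair up into two sums that vanish by
the invariance of the Casimir tensor `∑ e_b ⊗ e^b`.
-/

theorem ZMod.neg_one_pow_val_add_one {R : Type*} [Ring R] (i : ZMod 2) :
    (-1 : R) ^ (i + 1).val = -(-1) ^ i.val := by
  rw [ZMod.val_add, ZMod.val_one, ← neg_one_pow_eq_pow_mod_two, pow_succ, mul_neg_one]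

section Commutator

variable {R A : Type*} [CommRing R] [Ring A] [Algebra R A]

theorem supercommutator_supercommutator {ε : R} (hε : ε * ε = 1) (c y : A) :
    c * (c * y - ε • (y * c)) - (-ε) • ((c * y - ε • (y * c)) * c) = c * c * y - y * (c * c) := by
  rw [neg_smul, sub_neg_eq_add]
  simp only [mul_sub, sub_mul, mul_smul_comm, smul_mul_assoc, smul_sub, smul_smul, hε, one_smul,
    mul_assoc]
  abel

theorem supercommutator_comp_self_eq_zero (𝒜 : ZMod 2 → Submodule R A) [GradedAlgebra 𝒜]
    {c : A} (hc : c ∈ 𝒜 1) (hcc : ∀ x, Commute (c * c) x) (δ : A →ₗ[R] A)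
    (hδ : ∀ i, ∀ x ∈ 𝒜 i, δ x = c * x - ((-1 : R) ^ i.val) • (x * c)) (x : A) :
    δ (δ x) = 0 := by
  induction x using DirectSum.Decomposition.inductionOn 𝒜 with
  | zero => simp
  | add x y hx hy => simp [hx, hy]
  | @homogeneous i x =>
    obtain ⟨x, hx⟩ := x
    have hδx : δ x ∈ 𝒜 (i + 1) := by
      rw [hδ i x hx]
      refine Submodule.sub_mem _ ?_ (Submodule.smul_mem _ _ (SetLike.mul_mem_graded hx hc))
      simpa [add_comm] using SetLike.mul_mem_graded hc hx
    have hsign : (-1 : R) ^ i.val * (-1) ^ i.val = 1 := by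
      rw [← mul_pow, neg_one_mul, neg_neg, one_pow]
    rw [hδ _ _ hδx, hδ i x hx, ZMod.neg_one_pow_val_add_one, supercommutator_supercommutator hsign,
      (hcc x).eq, sub_self]

theorem lie_mul_mul (t x y z : A) :
    ⁅t, x * y * z⁆ = ⁅t, x⁆ * y * z + x * ⁅t, y⁆ * z + x * y * ⁅t, z⁆ := by
  simp only [Ring.lie_def]
  noncomm_ring

end Commutator

namespace CliffordAlgebra

variable {R M : Type*} [CommRing R] [AddCommGroup M] [Module R M] {Q : QuadraticForm R M}

theorem commute_of_forall_commute_ι {z : CliffordAlgebra Q} (h : ∀ v, Commute z (ι Q v))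
    (x : CliffordAlgebra Q) : Commute z x := by
  induction x using CliffordAlgebra.induction with
  | algebraMap r => exact Algebra.commute_algebraMap_right r z
  | ι v => exact h v
  | mul a b ha hb => exact ha.mul_right hb
  | add a b ha hb => exact ha.add_right hb

variable (Q)

theorem ι_mul_ι_mul_ι_sub_swap (x y w : M) :
    ι Q x * ι Q y * ι Q w - ι Q w * (ι Q x * ι Q y) =
      QuadraticMap.polar Q w y • ι Q x - QuadraticMap.polar Q w x • ι Q y := by
  rw [mul_assoc, ι_mul_ι_comm (Q := Q) y w, mul_sub, ← mul_assoc, ι_mul_ι_comm (Q := Q) x w]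
  simp only [Algebra.algebraMap_eq_smul_one, sub_mul, mul_smul_comm, smul_mul_assoc, mul_one,
    one_mul, mul_assoc, QuadraticMap.polar_comm Q x, QuadraticMap.polar_comm Q y]
  abel

theorem ι_mul_ι_mul_ι_mul_ι_add_swap (v x y z : M) :
    ι Q x * ι Q y * ι Q z * ι Q v + ι Q v * (ι Q x * ι Q y * ι Q z) =
      QuadraticMap.polar Q v x • (ι Q y * ι Q z) - QuadraticMap.polar Q v y • (ι Q x * ι Q z) +
        QuadraticMap.polar Q v z • (ι Q x * ι Q y) := by
  calc _ = (ι Q v * ι Q x + ι Q x * ι Q v) * (ι Q y * ι Q z) +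
        ι Q x * (ι Q y * ι Q z * ι Q v - ι Q v * (ι Q y * ι Q z)) := by noncomm_ring
    _ = _ := by
      rw [ι_mul_ι_add_swap, ι_mul_ι_mul_ι_sub_swap, Algebra.algebraMap_eq_smul_one]
      simp only [smul_mul_assoc, one_mul, mul_sub, mul_smul_comm]
      abel

end CliffordAlgebra

theorem polar_eq_of_eq_half_mul_self {K g : Type*} [Field K] [CharZero K] [AddCommGroup g]
    [Module K g] {B : g →ₗ[K] g →ₗ[K] K} {Q : QuadraticForm K g} (hB_symm : ∀ x y, B x y = B y x)
    (hQ : ∀ v, Q v = (1 / 2 : K) * B v v) (u w : g) : QuadraticMap.polar Q u w = B u w := by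
  simp only [QuadraticMap.polar, hQ, map_add, LinearMap.add_apply, hB_symm w u]
  ring

section DualBasis

variable {K g κ M : Type*} [CommRing K] [AddCommGroup g] [Module K g] [AddCommGroup M] [Module K M]
  [DecidableEq κ] {B : g →ₗ[K] g →ₗ[K] K} {e : Module.Basis κ K g} {e' : κ → g}

theorem apply_dual_eq_repr (h_dual : ∀ a b, B (e a) (e' b) = if a = b then 1 else 0)
    (v : g) (a : κ) : B v (e' a) = e.repr v a := by
  suffices B.flip (e' a) = e.coord a from LinearMap.congr_fun this v
  refine e.ext fun b => ?_
  simp [h_dual, Finsupp.single_apply]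

variable [Fintype κ]

theorem sum_apply_dual_smul_apply_basis
    (h_dual : ∀ a b, B (e a) (e' b) = if a = b then 1 else 0) (L : g →ₗ[K] M) (v : g) :
    ∑ a, B v (e' a) • L (e a) = L v := by
  simp_rw [apply_dual_eq_repr h_dual, ← map_smul, ← map_sum, e.sum_repr]

theorem sum_apply_dual_mul_apply_basis
    (h_dual : ∀ a b, B (e a) (e' b) = if a = b then 1 else 0) (v z : g) :
    ∑ a, B v (e' a) * B (e a) z = B v z := by
  simpa using sum_apply_dual_smul_apply_basis h_dual (B.flip z) v

theorem sum_apply_basis_smul_dual (hB_symm : ∀ x y, B x y = B y x)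
    (hB_nondeg : ∀ x, (∀ y, B x y = 0) → x = 0)
    (h_dual : ∀ a b, B (e a) (e' b) = if a = b then 1 else 0) (v : g) :
    ∑ a, B (e a) v • e' a = v := by
  refine sub_eq_zero.mp (hB_nondeg _ fun y => ?_)
  rw [hB_symm, ← LinearMap.flip_apply (R := K)]
  suffices B.flip (∑ a, B (e a) v • e' a) = B.flip v by simp [this]
  refine e.ext fun b => ?_
  simp [h_dual, hB_symm (e b)]

theorem sum_apply_basis_smul_apply_dual (hB_symm : ∀ x y, B x y = B y x)
    (hB_nondeg : ∀ x, (∀ y, B x y = 0) → x = 0)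
    (h_dual : ∀ a b, B (e a) (e' b) = if a = b then 1 else 0) (L : g →ₗ[K] M) (v : g) :
    ∑ a, B (e a) v • L (e' a) = L v := by
  simp_rw [← map_smul, ← map_sum, sum_apply_basis_smul_dual hB_symm hB_nondeg h_dual]

/-- Invariance of the Casimir tensor `∑ b, e b ⊗ e' b` under `B`-skew maps. -/
theorem sum_apply_skew_add_sum_apply_skew (hB_symm : ∀ x y, B x y = B y x)
    (hB_nondeg : ∀ x, (∀ y, B x y = 0) → x = 0)
    (h_dual : ∀ a b, B (e a) (e' b) = if a = b then 1 else 0) {A : g → g}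
    (hA : ∀ u v, B (A u) v = -B u (A v)) (ψ : g →ₗ[K] g →ₗ[K] M) :
    ∑ b, ψ (A (e b)) (e' b) + ∑ b, ψ (e b) (A (e' b)) = 0 := by
  have h1 : ∀ b, ψ (A (e b)) (e' b) = ∑ a, B (A (e b)) (e' a) • ψ (e a) (e' b) := fun b =>
    (sum_apply_dual_smul_apply_basis h_dual (ψ.flip (e' b)) _).symm
  have h2 : ∀ b, ψ (e b) (A (e' b)) = ∑ a, B (e a) (A (e' b)) • ψ (e b) (e' a) := fun b =>
    (sum_apply_basis_smul_apply_dual hB_symm hB_nondeg h_dual (ψ (e b)) _).symm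
  simp_rw [h1, h2, hA, neg_smul, Finset.sum_neg_distrib]
  rw [Finset.sum_comm, neg_add_cancel]

end DualBasis

section InvariantForm

variable {K g κ : Type*} [CommRing K] [LieRing g] [LieAlgebra K g] {B : g →ₗ[K] g →ₗ[K] K}

theorem apply_lie_cyclic (hB_symm : ∀ x y, B x y = B y x)
    (hB_inv : ∀ x y z, B ⁅x, y⁆ z = B x ⁅y, z⁆) (x y z : g) : B x ⁅y, z⁆ = B z ⁅x, y⁆ := by
  rw [← hB_inv, hB_symm]

theorem apply_lie_swap (hB_inv : ∀ x y z, B ⁅x, y⁆ z = B x ⁅y, z⁆) (x y z : g) :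
    B x ⁅y, z⁆ = -B y ⁅x, z⁆ := by
  rw [← hB_inv, ← hB_inv, ← lie_skew, map_neg, LinearMap.neg_apply]

variable [Fintype κ] [DecidableEq κ] {e : Module.Basis κ K g} {e' : κ → g}

theorem sum_apply_dual_mul_apply_lie_basis
    (h_dual : ∀ a b, B (e a) (e' b) = if a = b then 1 else 0) (v x y : g) :
    ∑ a, B v (e' a) * B x ⁅y, e a⁆ = B x ⁅y, v⁆ :=
  sum_apply_dual_smul_apply_basis h_dual ((B x).comp (LieAlgebra.ad K g y)) v

theorem sum_apply_dual_mul_apply_basis_lie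
    (h_dual : ∀ a b, B (e a) (e' b) = if a = b then 1 else 0) (v x z : g) :
    ∑ a, B v (e' a) * B x ⁅e a, z⁆ = B x ⁅v, z⁆ := by
  simp_rw [← lie_skew _ z, map_neg, mul_neg, Finset.sum_neg_distrib,
    sum_apply_dual_mul_apply_lie_basis h_dual]

end InvariantForm

section CubicElement

open CliffordAlgebra

variable {K g κ : Type*} [Field K] [LieRing g] [LieAlgebra K g] [Fintype κ]
  (B : g →ₗ[K] g →ₗ[K] K) (Q : QuadraticForm K g) (e e' : κ → g)

def cubicElement : CliffordAlgebra Q :=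
  (1 / 6 : K) • ∑ a, ∑ b, ∑ c, B (e a) ⁅e b, e c⁆ • (ι Q (e' a) * ι Q (e' b) * ι Q (e' c))

def cubicContraction (x : g) : CliffordAlgebra Q :=
  (1 / 2 : K) • ∑ b, ∑ c, B x ⁅e b, e c⁆ • (ι Q (e' b) * ι Q (e' c))

theorem cubicElement_mem_evenOdd_one : cubicElement B Q e e' ∈ evenOdd Q 1 := by
  have h3 : ∀ a b c, ι Q (e' a) * ι Q (e' b) * ι Q (e' c) ∈ evenOdd Q (1 + 1 + 1) := fun a b c =>
    SetLike.mul_mem_graded (SetLike.mul_mem_graded (ι_mem_evenOdd_one Q (e' a))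
      (ι_mem_evenOdd_one Q (e' b))) (ι_mem_evenOdd_one Q (e' c))
  rw [show (1 + 1 + 1 : ZMod 2) = 1 from rfl] at h3
  unfold cubicElement
  refine Submodule.smul_mem _ _ (Submodule.sum_mem _ fun a _ => Submodule.sum_mem _ fun b _ =>
    Submodule.sum_mem _ fun c _ => Submodule.smul_mem _ _ (h3 a b c))

end CubicElement

section CubicElementSquare

open CliffordAlgebra

variable {K g κ : Type*} [Field K] [LieRing g] [LieAlgebra K g] [Fintype κ] [DecidableEq κ]
  {B : g →ₗ[K] g →ₗ[K] K} {Q : QuadraticForm K g} {e : Module.Basis κ K g} {e' : κ → g}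

theorem cubicElement_eq_sum_lie (hB_symm : ∀ x y, B x y = B y x)
    (hB_nondeg : ∀ x, (∀ y, B x y = 0) → x = 0)
    (h_dual : ∀ a b, B (e a) (e' b) = if a = b then 1 else 0) :
    cubicElement B Q e e' =
      (1 / 6 : K) • ∑ b, ∑ c, ι Q ⁅e b, e c⁆ * ι Q (e' b) * ι Q (e' c) := by
  rw [cubicElement, Finset.sum_comm]
  refine congrArg _ (Finset.sum_congr rfl fun b _ => ?_)
  rw [Finset.sum_comm]
  simp_rw [← smul_mul_assoc, ← Finset.sum_mul,
    sum_apply_basis_smul_apply_dual hB_symm hB_nondeg h_dual (ι Q)]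

variable [CharZero K]

theorem lie_cubicContraction_ι (hpolar : ∀ u w, QuadraticMap.polar Q u w = B u w)
    (hB_symm : ∀ x y, B x y = B y x) (hB_nondeg : ∀ x, (∀ y, B x y = 0) → x = 0)
    (hB_inv : ∀ x y z, B ⁅x, y⁆ z = B x ⁅y, z⁆)
    (h_dual : ∀ a b, B (e a) (e' b) = if a = b then 1 else 0) (x w : g) :
    ⁅cubicContraction B Q e e' x, ι Q w⁆ = ι Q ⁅w, x⁆ := by
  have h1 : ∑ b, ∑ c, (B x ⁅e b, e c⁆ * B w (e' c)) • ι Q (e' b) = ι Q ⁅w, x⁆ := by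
    simp_rw [← Finset.sum_smul, mul_comm _ (B w _), sum_apply_dual_mul_apply_lie_basis h_dual,
      ← apply_lie_cyclic hB_symm hB_inv (e _) w x]
    exact sum_apply_basis_smul_apply_dual hB_symm hB_nondeg h_dual (ι Q) _
  have h2 : ∑ b, ∑ c, (B x ⁅e b, e c⁆ * B w (e' b)) • ι Q (e' c) = -ι Q ⁅w, x⁆ := by
    rw [← h1, Finset.sum_comm]
    simp only [← Finset.sum_neg_distrib, ← neg_smul, ← neg_mul, ← map_neg, lie_skew]
  calc _ = (1 / 2 : K) • ∑ b, ∑ c, B x ⁅e b, e c⁆ •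
        (ι Q (e' b) * ι Q (e' c) * ι Q w - ι Q w * (ι Q (e' b) * ι Q (e' c))) := by
        simp only [cubicContraction, Ring.lie_def, smul_mul_assoc, mul_smul_comm, Finset.sum_mul,
          Finset.mul_sum, ← smul_sub, ← Finset.sum_sub_distrib]
    _ = (1 / 2 : K) • (∑ b, ∑ c, (B x ⁅e b, e c⁆ * B w (e' c)) • ι Q (e' b) -
          ∑ b, ∑ c, (B x ⁅e b, e c⁆ * B w (e' b)) • ι Q (e' c)) := by
        simp only [ι_mul_ι_mul_ι_sub_swap, hpolar, smul_sub, smul_smul, Finset.sum_sub_distrib]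
    _ = ι Q ⁅w, x⁆ := by rw [h1, h2]; module

theorem cubicElement_mul_ι_add_ι_mul_cubicElement
    (hpolar : ∀ u w, QuadraticMap.polar Q u w = B u w) (hB_symm : ∀ x y, B x y = B y x)
    (hB_inv : ∀ x y z, B ⁅x, y⁆ z = B x ⁅y, z⁆)
    (h_dual : ∀ a b, B (e a) (e' b) = if a = b then 1 else 0) (v : g) :
    cubicElement B Q e e' * ι Q v + ι Q v * cubicElement B Q e e' =
      cubicContraction B Q e e' v := by
  set S := ∑ b, ∑ c, B v ⁅e b, e c⁆ • (ι Q (e' b) * ι Q (e' c))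
  have h1 : ∑ a, ∑ b, ∑ c, (B (e a) ⁅e b, e c⁆ * B v (e' a)) • (ι Q (e' b) * ι Q (e' c)) = S := by
    rw [Finset.sum_comm]
    refine Finset.sum_congr rfl fun b _ => ?_
    rw [Finset.sum_comm]
    simp_rw [← Finset.sum_smul, mul_comm _ (B v _), sum_apply_dual_mul_apply_basis h_dual]
  have h2 : ∑ a, ∑ b, ∑ c, (B (e a) ⁅e b, e c⁆ * B v (e' b)) • (ι Q (e' a) * ι Q (e' c)) = -S := by
    rw [← Finset.sum_neg_distrib]
    refine Finset.sum_congr rfl fun a _ => ?_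
    rw [Finset.sum_comm]
    simp_rw [← Finset.sum_smul, mul_comm _ (B v _), sum_apply_dual_mul_apply_basis_lie h_dual,
      apply_lie_swap hB_inv (e a) v, neg_smul, Finset.sum_neg_distrib]
  have h3 : ∑ a, ∑ b, ∑ c, (B (e a) ⁅e b, e c⁆ * B v (e' c)) • (ι Q (e' a) * ι Q (e' b)) = S := by
    simp_rw [← Finset.sum_smul, mul_comm _ (B v _), sum_apply_dual_mul_apply_lie_basis h_dual,
      apply_lie_cyclic hB_symm hB_inv (e _) (e _) v]
    rfl
  calc _ = (1 / 6 : K) • ∑ a, ∑ b, ∑ c, B (e a) ⁅e b, e c⁆ •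
        (ι Q (e' a) * ι Q (e' b) * ι Q (e' c) * ι Q v +
          ι Q v * (ι Q (e' a) * ι Q (e' b) * ι Q (e' c))) := by
        simp only [cubicElement, smul_mul_assoc, mul_smul_comm, Finset.sum_mul, Finset.mul_sum,
          ← smul_add, ← Finset.sum_add_distrib]
    _ = (1 / 6 : K) • (∑ a, ∑ b, ∑ c, (B (e a) ⁅e b, e c⁆ * B v (e' a)) • (ι Q (e' b) * ι Q (e' c))
          - ∑ a, ∑ b, ∑ c, (B (e a) ⁅e b, e c⁆ * B v (e' b)) • (ι Q (e' a) * ι Q (e' c))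
          + ∑ a, ∑ b, ∑ c, (B (e a) ⁅e b, e c⁆ * B v (e' c)) • (ι Q (e' a) * ι Q (e' b))) := by
        simp only [ι_mul_ι_mul_ι_mul_ι_add_swap, hpolar, smul_add, smul_sub, smul_smul,
          Finset.sum_add_distrib, Finset.sum_sub_distrib]
    _ = cubicContraction B Q e e' v := by
        rw [h1, h2, h3, cubicContraction]
        module

theorem lie_cubicElement_eq_zero_of_lie_ι (hB_symm : ∀ x y, B x y = B y x)
    (hB_nondeg : ∀ x, (∀ y, B x y = 0) → x = 0)
    (h_dual : ∀ a b, B (e a) (e' b) = if a = b then 1 else 0) {A : g → g}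
    (hA_skew : ∀ u v, B (A u) v = -B u (A v)) (hA_der : ∀ u v, A ⁅u, v⁆ = ⁅A u, v⁆ + ⁅u, A v⁆)
    {t : CliffordAlgebra Q} (ht : ∀ w, ⁅t, ι Q w⁆ = ι Q (A w)) :
    ⁅t, cubicElement B Q e e'⁆ = 0 := by
  let ψ₁ (c : κ) : g →ₗ[K] g →ₗ[K] CliffordAlgebra Q :=
    LinearMap.mk₂ K (fun u v => ι Q ⁅u, e c⁆ * ι Q v * ι Q (e' c))
      (by simp [add_lie, add_mul]) (by simp [smul_lie]) (by simp [mul_add, add_mul]) (by simp)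
  let ψ₂ (b : κ) : g →ₗ[K] g →ₗ[K] CliffordAlgebra Q :=
    LinearMap.mk₂ K (fun u v => ι Q ⁅e b, u⁆ * ι Q (e' b) * ι Q v)
      (by simp [lie_add, add_mul]) (by simp [lie_smul]) (by simp [mul_add]) (by simp)
  have h₁ : ∑ c, ∑ b, ι Q ⁅A (e b), e c⁆ * ι Q (e' b) * ι Q (e' c) +
      ∑ c, ∑ b, ι Q ⁅e b, e c⁆ * ι Q (A (e' b)) * ι Q (e' c) = 0 := by
    rw [← Finset.sum_add_distrib]
    exact Finset.sum_eq_zero fun c _ =>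
      sum_apply_skew_add_sum_apply_skew hB_symm hB_nondeg h_dual hA_skew (ψ₁ c)
  have h₂ : ∑ b, ∑ c, ι Q ⁅e b, A (e c)⁆ * ι Q (e' b) * ι Q (e' c) +
      ∑ b, ∑ c, ι Q ⁅e b, e c⁆ * ι Q (e' b) * ι Q (A (e' c)) = 0 := by
    rw [← Finset.sum_add_distrib]
    exact Finset.sum_eq_zero fun b _ =>
      sum_apply_skew_add_sum_apply_skew hB_symm hB_nondeg h_dual hA_skew (ψ₂ b)
  rw [cubicElement_eq_sum_lie hB_symm hB_nondeg h_dual, Ring.lie_def]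
  simp only [mul_smul_comm, smul_mul_assoc, Finset.mul_sum, Finset.sum_mul, ← smul_sub,
    ← Finset.sum_sub_distrib, ← Ring.lie_def]
  simp_rw [lie_mul_mul, ht, hA_der, map_add, add_mul, Finset.sum_add_distrib]
  rw [Finset.sum_comm (f := fun b c => ι Q ⁅A (e b), e c⁆ * ι Q (e' b) * ι Q (e' c)),
    Finset.sum_comm (f := fun b c => ι Q ⁅e b, e c⁆ * ι Q (A (e' b)) * ι Q (e' c))]
  linear_combination (norm := module) (1 / 6 : K) • (h₁ + h₂)

theorem lie_cubicContraction_cubicElement (hpolar : ∀ u w, QuadraticMap.polar Q u w = B u w)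
    (hB_symm : ∀ x y, B x y = B y x) (hB_nondeg : ∀ x, (∀ y, B x y = 0) → x = 0)
    (hB_inv : ∀ x y z, B ⁅x, y⁆ z = B x ⁅y, z⁆)
    (h_dual : ∀ a b, B (e a) (e' b) = if a = b then 1 else 0) (x : g) :
    ⁅cubicContraction B Q e e' x, cubicElement B Q e e'⁆ = 0 := by
  refine lie_cubicElement_eq_zero_of_lie_ι hB_symm hB_nondeg h_dual (A := (⁅·, x⁆))
    (fun u v => ?_) (fun u v => ?_)
    (lie_cubicContraction_ι hpolar hB_symm hB_nondeg hB_inv h_dual x)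
  · rw [hB_inv, ← lie_skew, map_neg]
  · rw [leibniz_lie u v x, ← lie_skew v ⁅u, x⁆]
    abel

theorem commute_cubicElement_mul_self (hpolar : ∀ u w, QuadraticMap.polar Q u w = B u w)
    (hB_symm : ∀ x y, B x y = B y x) (hB_nondeg : ∀ x, (∀ y, B x y = 0) → x = 0)
    (hB_inv : ∀ x y z, B ⁅x, y⁆ z = B x ⁅y, z⁆)
    (h_dual : ∀ a b, B (e a) (e' b) = if a = b then 1 else 0) (z : CliffordAlgebra Q) :
    Commute (cubicElement B Q e e' * cubicElement B Q e e') z := by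
  refine commute_of_forall_commute_ι (fun v => sub_eq_zero.mp ?_) z
  set C := cubicElement B Q e e'
  calc C * C * ι Q v - ι Q v * (C * C) = -⁅C * ι Q v + ι Q v * C, C⁆ := by
        rw [Ring.lie_def]; noncomm_ring
    _ = 0 := by
        rw [cubicElement_mul_ι_add_ι_mul_cubicElement hpolar hB_symm hB_inv h_dual,
          lie_cubicContraction_cubicElement hpolar hB_symm hB_nondeg hB_inv h_dual, neg_zero]

end CubicElementSquare

open CliffordAlgebra

theorem clifford_differential_squares_to_zero_general
    {g : Type*} [LieRing g] [LieAlgebra ℝ g]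
    -- the invariant, non-degenerate, symmetric bilinear form B
    (B : g →ₗ[ℝ] g →ₗ[ℝ] ℝ)
    (hB_symm : ∀ x y : g, B x y = B y x)
    (hB_nondeg : ∀ x : g, (∀ y : g, B x y = 0) → x = 0)
    (hB_inv : ∀ x y z : g, B ⁅x, y⁆ z = B x ⁅y, z⁆)
    -- a basis (e_a) and its B-dual basis (e^a)
    {κ : Type*} [Fintype κ] [DecidableEq κ] (e : Module.Basis κ ℝ g) (e' : κ → g)
    (h_dual : ∀ a b : κ, B (e a) (e' b) = if a = b then 1 else 0)
    -- the Clifford algebra of the quadratic form Q(v) = (1/2)·B(v,v)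
    (Q : QuadraticForm ℝ g) (hQ : ∀ v : g, Q v = (1 / 2 : ℝ) * B v v)
    -- the structure constants f_{abc}
    (f : κ → κ → κ → ℝ) (hf : ∀ a b c : κ, f a b c = B (e a) ⁅e b, e c⁆)
    -- the cubic element C
    (C : CliffordAlgebra Q)
    (hC : C = (1 / 6 : ℝ) •
      ∑ a : κ, ∑ b : κ, ∑ c : κ, f a b c • (ι Q (e' a) * ι Q (e' b) * ι Q (e' c)))
    -- the supercommutator with C, defined on homogeneous elements of the ℤ₂-grading
    -- of Cl(g) and extended linearly
    (δ : CliffordAlgebra Q →ₗ[ℝ] CliffordAlgebra Q)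
    (hδ : ∀ (i : ZMod 2), ∀ x ∈ evenOdd Q i,
      δ x = C * x - ((-1 : ℝ) ^ i.val) • (x * C)) :
    ∀ x : CliffordAlgebra Q, δ (δ x) = 0 := by
  have hpolar := polar_eq_of_eq_half_mul_self hB_symm hQ
  obtain rfl : C = cubicElement B Q e e' := by simp only [hC, hf, cubicElement]
  exact supercommutator_comp_self_eq_zero (evenOdd Q) (cubicElement_mem_evenOdd_one B Q e e')
    (commute_cubicElement_mul_self hpolar hB_symm hB_nondeg hB_inv h_dual) δ hδ

theorem clifford_differential_squares_to_zero
    {g : Type*} [LieRing g] [LieAlgebra ℝ g] [FiniteDimensional ℝ g]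
    -- the invariant, non-degenerate, symmetric bilinear form B
    (B : g →ₗ[ℝ] g →ₗ[ℝ] ℝ)
    (hB_symm : ∀ x y : g, B x y = B y x)
    (hB_nondeg : ∀ x : g, (∀ y : g, B x y = 0) → x = 0)
    (hB_inv : ∀ x y z : g, B ⁅x, y⁆ z = B x ⁅y, z⁆)
    -- a basis (e_a) and its B-dual basis (e^a)
    {κ : Type*} [Fintype κ] [DecidableEq κ] (e : Module.Basis κ ℝ g) (e' : κ → g)
    (h_dual : ∀ a b : κ, B (e a) (e' b) = if a = b then 1 else 0)
    -- the Clifford algebra of the quadratic form Q(v) = (1/2)·B(v,v)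
    (Q : QuadraticForm ℝ g) (hQ : ∀ v : g, Q v = (1 / 2 : ℝ) * B v v)
    -- the structure constants f_{abc}
    (f : κ → κ → κ → ℝ) (hf : ∀ a b c : κ, f a b c = B (e a) ⁅e b, e c⁆)
    -- the cubic element C
    (C : CliffordAlgebra Q)
    (hC : C = (1 / 6 : ℝ) •
      ∑ a : κ, ∑ b : κ, ∑ c : κ, f a b c • (ι Q (e' a) * ι Q (e' b) * ι Q (e' c)))
    -- the supercommutator with C, defined on homogeneous elements of the ℤ₂-grading
    -- of Cl(g) and extended linearly
    (δ : CliffordAlgebra Q →ₗ[ℝ] CliffordAlgebra Q)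
    (hδ : ∀ (i : ZMod 2), ∀ x ∈ evenOdd Q i,
      δ x = C * x - ((-1 : ℝ) ^ i.val) • (x * C)) :
    ∀ x : CliffordAlgebra Q, δ (δ x) = 0 :=
  clifford_differential_squares_to_zero_general B hB_symm hB_nondeg hB_inv e e' h_dual Q hQ f hf C
    hC δ hδ
end

section
/- Let g be a finite-dimensional real quadratic Lie algebra, and let D = Σ_a e_a ⊗ e^a − 1 ⊗ C be the cubic Dirac operator in the noncommutative Weil algebra W(g) = U(g) ⊗ Cl(g). Then D² = (1/2)·Σ_a (e_a·e^a) ⊗ 1 − (1/48)·(Σ_{a,b,c} f_{abc}·f^{abc})·(1 ⊗ 1), where the product e_a·e^a is taken in U(g). -/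
/-!
Write `D = S - 1 ⊗ C` with `S = ∑ₐ eₐ ⊗ ψᵃ`, where `ψᵃ = ι(eᵃ)` satisfy
`ψᵃψᵇ + ψᵇψᵃ = B(eᵃ, eᵇ)`. Symmetrising with this relation gives
`S² = ½ ∑ₐ eₐeᵃ ⊗ 1 + ½ ∑_{a,b} [eₐ, e_b] ⊗ ψᵃψᵇ`. Invariance of `B` makes the anticommutator of
`ψᵈ` with `C` the quadratic element `½ ∑_{p,q} B(eᵈ, [e_p, e_q]) ψᵖψ^q`, so the cross term
`S (1 ⊗ C) + (1 ⊗ C) S` is exactly the second half of `S²` and cancels.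

What remains is `1 ⊗ C²`. The same anticommutator turns `2C²` into a quartic expression in the `ψ`
with coefficients `K_{bcpq} = B([e_b, e_c], [e_p, e_q])`, which have the symmetries of a curvature
tensor. Reordering the quartic monomials with the Clifford relation produces full contractions of
`K`, and the first Bianchi identity, i.e. the Jacobi identity, removes the part that cannot be
reordered; only the scalar `∑ K_{bcpq} B(eᵇ, eᵖ) B(eᶜ, e^q) = ∑ f_{abc} f^{abc}` survives.
-/

open CliffordAlgebra
open scoped TensorProduct

section SumRelabel

variable {κ M : Type*} [Fintype κ] [AddCommMonoid M]

theorem sum_rotate₃ (F : κ → κ → κ → M) :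
    ∑ a, ∑ b, ∑ c, F a b c = ∑ a, ∑ b, ∑ c, F b c a :=
  (Finset.sum_comm.trans (Finset.sum_congr rfl fun _ _ => Finset.sum_comm)).symm

theorem sum_swap_pairs (F : κ → κ → κ → κ → M) :
    ∑ a, ∑ b, ∑ c, ∑ d, F a b c d = ∑ a, ∑ b, ∑ c, ∑ d, F c d a b := by
  calc ∑ a, ∑ b, ∑ c, ∑ d, F a b c d = ∑ p : κ × κ, ∑ q : κ × κ, F p.1 p.2 q.1 q.2 := by
        simp only [Fintype.sum_prod_type]
    _ = ∑ q : κ × κ, ∑ p : κ × κ, F p.1 p.2 q.1 q.2 := Finset.sum_comm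
    _ = ∑ a, ∑ b, ∑ c, ∑ d, F c d a b := by simp only [Fintype.sum_prod_type]

end SumRelabel

section DualBasis

variable {R M ι : Type*} [CommRing R] [AddCommGroup M] [Module R M] [Fintype ι] [DecidableEq ι]
  {B : M →ₗ[R] M →ₗ[R] R} {e : Module.Basis ι R M} {e' : ι → M}

theorem Module.Basis.repr_eq_of_dual (h_dual : ∀ a b, B (e a) (e' b) = if a = b then 1 else 0)
    (x : M) (a : ι) : e.repr x a = B x (e' a) := by
  conv_rhs => rw [← e.sum_repr x]
  simp only [map_sum, map_smul, LinearMap.sum_apply, LinearMap.smul_apply, h_dual, smul_eq_mul,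
    mul_ite, mul_one, mul_zero, Finset.sum_ite_eq', Finset.mem_univ, if_true]

theorem map_eq_sum_dual_smul {N : Type*} [AddCommGroup N] [Module R N]
    (h_dual : ∀ a b, B (e a) (e' b) = if a = b then 1 else 0) (φ : M →ₗ[R] N) (x : M) :
    φ x = ∑ a, B x (e' a) • φ (e a) := by
  conv_lhs => rw [← e.sum_repr x]
  simp [e.repr_eq_of_dual h_dual]

theorem sum_smul_dual (hB : ∀ x y, B x y = B y x)
    (h_dual : ∀ a b, B (e a) (e' b) = if a = b then 1 else 0) (x : M) :
    ∑ a, B x (e a) • e' a = x := by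
  rw [← sub_eq_zero]
  generalize hz : ∑ a, B x (e a) • e' a - x = z
  have hez : ∀ c, B (e c) z = 0 := fun c => by simp [← hz, h_dual, hB x]
  refine e.ext_elem fun b => ?_
  rw [map_zero, Finsupp.zero_apply, e.repr_eq_of_dual h_dual, hB, ← B.flip_apply,
    map_eq_sum_dual_smul h_dual (B.flip z)]
  simp [hez]

theorem map_eq_sum_smul_dual {N : Type*} [AddCommGroup N] [Module R N]
    (hB : ∀ x y, B x y = B y x)
    (h_dual : ∀ a b, B (e a) (e' b) = if a = b then 1 else 0) (φ : M →ₗ[R] N) (x : M) :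
    φ x = ∑ a, B x (e a) • φ (e' a) := by
  conv_lhs => rw [← sum_smul_dual hB h_dual x]
  simp

theorem sum_mul_dual (hB : ∀ x y, B x y = B y x)
    (h_dual : ∀ a b, B (e a) (e' b) = if a = b then 1 else 0) (x y : M) :
    ∑ a, B x (e a) * B (e' a) y = B x y :=
  (map_eq_sum_smul_dual hB h_dual (B.flip y) x).symm

end DualBasis

section AnticommutingFamily

variable {R κ A : Type*} [Ring A] {ψ : κ → A}

theorem mul_mul_eq_mul_mul_add [CommSemiring R] [Algebra R A] {G : κ → κ → R}
    (hψ : ∀ a b, ψ a * ψ b + ψ b * ψ a = G a b • 1) (a b c : κ) :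
    ψ a * ψ b * ψ c = ψ b * ψ c * ψ a + G a b • ψ c - G a c • ψ b := by
  rw [eq_sub_of_add_eq (hψ a b), sub_mul, smul_mul_assoc, one_mul, mul_assoc,
    eq_sub_of_add_eq (hψ a c), mul_sub, mul_smul_comm, mul_one, ← mul_assoc]
  abel

theorem anticomm_mul_mul_mul [CommSemiring R] [Algebra R A] {G : κ → κ → R}
    (hψ : ∀ a b, ψ a * ψ b + ψ b * ψ a = G a b • 1) (d a b c : κ) :
    ψ d * (ψ a * ψ b * ψ c) + ψ a * ψ b * ψ c * ψ d
      = G d a • (ψ b * ψ c) - G d b • (ψ a * ψ c) + G d c • (ψ a * ψ b) := by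
  have h : ψ d * (ψ a * ψ b * ψ c) + ψ a * ψ b * ψ c * ψ d
      = (ψ d * ψ a + ψ a * ψ d) * ψ b * ψ c - ψ a * (ψ d * ψ b + ψ b * ψ d) * ψ c
        + ψ a * ψ b * (ψ d * ψ c + ψ c * ψ d) := by noncomm_ring
  rw [h, hψ, hψ, hψ]
  simp only [smul_mul_assoc, mul_smul_comm, one_mul, mul_one]

variable [Fintype κ]

theorem mul_cubic_add_cubic_mul [CommSemiring R] [Algebra R A] (F : κ → κ → κ → R) (X : A) :
    X * (∑ a, ∑ b, ∑ c, F a b c • (ψ a * ψ b * ψ c))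
        + (∑ a, ∑ b, ∑ c, F a b c • (ψ a * ψ b * ψ c)) * X
      = ∑ a, ∑ b, ∑ c, F a b c • (X * (ψ a * ψ b * ψ c) + ψ a * ψ b * ψ c * X) := by
  simp only [Finset.mul_sum, Finset.sum_mul, mul_smul_comm, smul_mul_assoc,
    ← Finset.sum_add_distrib, ← smul_add]

theorem anticomm_sum_cubic [CommRing R] [Algebra R A] {G : κ → κ → R}
    (hψ : ∀ a b, ψ a * ψ b + ψ b * ψ a = G a b • 1)
    (F : κ → κ → κ → R) (hF_anti : ∀ a b c, F b a c = -F a b c)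
    (hF_cyc : ∀ a b c, F b c a = F a b c) (d : κ) :
    ψ d * (∑ a, ∑ b, ∑ c, F a b c • (ψ a * ψ b * ψ c))
        + (∑ a, ∑ b, ∑ c, F a b c • (ψ a * ψ b * ψ c)) * ψ d
      = (3 : R) • ∑ b, ∑ c, (∑ a, G d a * F a b c) • (ψ b * ψ c) := by
  set T := ∑ a, ∑ b, ∑ c, (F a b c * G d a) • (ψ b * ψ c)
  have h₂ : ∑ a, ∑ b, ∑ c, (F a b c * G d b) • (ψ a * ψ c) = -T := by
    have h : ∀ a b c, (F b a c * G d a) • (ψ b * ψ c) = -((F a b c * G d a) • (ψ b * ψ c)) :=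
      fun a b c => by rw [hF_anti, neg_mul, neg_smul]
    rw [Finset.sum_comm]
    simp only [h, Finset.sum_neg_distrib, T]
  have h₃ : ∑ a, ∑ b, ∑ c, (F a b c * G d c) • (ψ a * ψ b) = T := by
    rw [sum_rotate₃]
    simp only [hF_cyc, T]
  have hT : T = ∑ b, ∑ c, (∑ a, G d a * F a b c) • (ψ b * ψ c) := by
    simp only [T, Finset.sum_smul, mul_comm (G d _)]
    rw [Finset.sum_comm]
    exact Finset.sum_congr rfl fun _ _ => Finset.sum_comm
  rw [mul_cubic_add_cubic_mul]
  simp only [anticomm_mul_mul_mul hψ, smul_add, smul_sub, smul_smul, Finset.sum_add_distrib,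
    Finset.sum_sub_distrib, h₂, h₃]
  rw [← hT]
  module

theorem two_smul_cubic_mul_self [CommRing R] [Algebra R A] (F : κ → κ → κ → R)
    (hF_anti : ∀ a b c, F b a c = -F a b c) (hF_cyc : ∀ a b c, F b c a = F a b c) (Λ : κ → A)
    (hΛ : ∀ a, ψ a * (∑ a, ∑ b, ∑ c, F a b c • (ψ a * ψ b * ψ c))
        + (∑ a, ∑ b, ∑ c, F a b c • (ψ a * ψ b * ψ c)) * ψ a = (3 : R) • Λ a) :
    (2 : R) • ((∑ a, ∑ b, ∑ c, F a b c • (ψ a * ψ b * ψ c))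
        * (∑ a, ∑ b, ∑ c, F a b c • (ψ a * ψ b * ψ c)))
      = (3 : R) • ∑ a, ∑ b, ∑ c,
          F a b c • (Λ a * ψ b * ψ c + ψ b * Λ a * ψ c + ψ b * ψ c * Λ a) := by
  set S := ∑ a, ∑ b, ∑ c, F a b c • (ψ a * ψ b * ψ c)
  have hpt : ∀ a b c, S * (ψ a * ψ b * ψ c) + ψ a * ψ b * ψ c * S
      = (3 : R) • (Λ a * ψ b * ψ c - ψ a * Λ b * ψ c + ψ a * ψ b * Λ c) := fun a b c => by
    have h : S * (ψ a * ψ b * ψ c) + ψ a * ψ b * ψ c * S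
        = (ψ a * S + S * ψ a) * ψ b * ψ c - ψ a * (ψ b * S + S * ψ b) * ψ c
          + ψ a * ψ b * (ψ c * S + S * ψ c) := by noncomm_ring
    rw [h, hΛ, hΛ, hΛ]
    simp only [smul_mul_assoc, mul_smul_comm, smul_add, smul_sub]
  have h₂ : ∑ a, ∑ b, ∑ c, F a b c • (ψ a * Λ b * ψ c)
      = -∑ a, ∑ b, ∑ c, F a b c • (ψ b * Λ a * ψ c) := by
    have h : ∀ a b c, F b a c • (ψ b * Λ a * ψ c) = -(F a b c • (ψ b * Λ a * ψ c)) :=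
      fun a b c => by rw [hF_anti, neg_smul]
    rw [Finset.sum_comm]
    simp only [h, Finset.sum_neg_distrib]
  have h₃ : ∑ a, ∑ b, ∑ c, F a b c • (ψ a * ψ b * Λ c)
      = ∑ a, ∑ b, ∑ c, F a b c • (ψ b * ψ c * Λ a) := by
    rw [sum_rotate₃]
    simp only [hF_cyc]
  rw [two_smul, mul_cubic_add_cubic_mul]
  simp only [hpt, smul_comm (F _ _ _) (3 : R), ← Finset.smul_sum, smul_add, smul_sub,
    Finset.sum_add_distrib, Finset.sum_sub_distrib, h₂, h₃]
  module

theorem sum_smul_quartic_rotate_left [CommRing R] [Algebra R A] {G : κ → κ → R}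
    (hψ : ∀ a b, ψ a * ψ b + ψ b * ψ a = G a b • 1)
    (K : κ → κ → κ → κ → R) (hK_anti : ∀ a b c d, K a b d c = -K a b c d) :
    ∑ a, ∑ b, ∑ c, ∑ d, K a b c d • (ψ a * ψ c * ψ d * ψ b)
      = ∑ a, ∑ b, ∑ c, ∑ d, K a b c d • (ψ a * ψ b * ψ c * ψ d)
        + 2 • ∑ a, ∑ b, ∑ c, ∑ d, (K a b c d * G b d) • (ψ a * ψ c) := by
  have h : ∀ a b c d, K a b c d • (ψ a * ψ c * ψ d * ψ b) = K a b c d • (ψ a * ψ b * ψ c * ψ d)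
      - (K a b c d * G b c) • (ψ a * ψ d) + (K a b c d * G b d) • (ψ a * ψ c) :=
    fun a b c d => by
      have t := congrArg (ψ a * ·) (mul_mul_eq_mul_mul_add hψ b c d)
      simp only [mul_add, mul_sub, mul_smul_comm, ← mul_assoc] at t
      rw [t, ← smul_smul, ← smul_smul, ← smul_sub, ← smul_add]
      abel_nf
  have hK : ∀ a b c d, K a b d c * G b d = -(K a b c d * G b d) := fun a b c d => by
    rw [hK_anti, neg_mul]
  have hswap : ∑ a, ∑ b, ∑ c, ∑ d, (K a b c d * G b c) • (ψ a * ψ d)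
      = -∑ a, ∑ b, ∑ c, ∑ d, (K a b c d * G b d) • (ψ a * ψ c) := by
    rw [Finset.sum_congr rfl fun _ _ => Finset.sum_congr rfl fun _ _ => Finset.sum_comm]
    simp only [hK, neg_smul, Finset.sum_neg_distrib]
  simp only [h, Finset.sum_add_distrib, Finset.sum_sub_distrib, hswap]
  abel

variable [Field R] [CharZero R] [Algebra R A] {G : κ → κ → R}

theorem sum_smul_mul_of_symm (hψ : ∀ a b, ψ a * ψ b + ψ b * ψ a = G a b • 1)
    (M : κ → κ → R) (hM : ∀ a b, M a b = M b a) :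
    ∑ a, ∑ b, M a b • (ψ a * ψ b) = ((1 / 2 : R) * ∑ a, ∑ b, M a b * G a b) • 1 := by
  have h2 : (2 : R) • ∑ a, ∑ b, M a b • (ψ a * ψ b) = (∑ a, ∑ b, M a b * G a b) • 1 := by
    calc (2 : R) • ∑ a, ∑ b, M a b • (ψ a * ψ b)
        = ∑ a, ∑ b, M a b • (ψ a * ψ b) + ∑ a, ∑ b, M b a • (ψ b * ψ a) := by
          rw [two_smul, Finset.sum_comm (f := fun a b => M b a • (ψ b * ψ a))]
      _ = (∑ a, ∑ b, M a b * G a b) • 1 := by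
          simp only [hM _ _, ← Finset.sum_add_distrib, ← smul_add, hψ, smul_smul,
            Finset.sum_smul]
  rw [mul_smul, ← h2, smul_smul]
  norm_num

theorem sum_ricci_smul_mul (hψ : ∀ a b, ψ a * ψ b + ψ b * ψ a = G a b • 1)
    (hG : ∀ a b, G a b = G b a) (K : κ → κ → κ → κ → R)
    (hK_pair : ∀ a b c d, K c d a b = K a b c d) :
    ∑ a, ∑ b, ∑ c, ∑ d, (K a b c d * G b d) • (ψ a * ψ c)
      = ((1 / 2 : R) * ∑ a, ∑ b, ∑ c, ∑ d, K a b c d * G a c * G b d) • 1 := by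
  have hM : ∀ a c, ∑ b, ∑ d, K c b a d * G b d = ∑ b, ∑ d, K a b c d * G b d := fun a c => by
    rw [Finset.sum_comm]
    simp only [← hK_pair a _ c, hG]
  calc ∑ a, ∑ b, ∑ c, ∑ d, (K a b c d * G b d) • (ψ a * ψ c)
      = ∑ a, ∑ c, (∑ b, ∑ d, K a b c d * G b d) • (ψ a * ψ c) := by
        simp only [Finset.sum_smul]
        exact Finset.sum_congr rfl fun _ _ => Finset.sum_comm
    _ = _ := by
        rw [sum_smul_mul_of_symm hψ _ fun a c => (hM a c).symm]
        simp only [Finset.sum_mul, mul_right_comm _ (G _ _) (G _ _)]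
        congr 2
        exact Finset.sum_congr rfl fun _ _ => Finset.sum_comm

theorem sum_antisymm_mul_symm_eq_zero (K G : κ → κ → R) (hK : ∀ c d, K d c = -K c d)
    (hG : ∀ c d, G c d = G d c) : ∑ c, ∑ d, K c d * G c d = 0 := by
  have h : ∑ c, ∑ d, K c d * G c d = ∑ c, ∑ d, -(K c d * G c d) := by
    rw [Finset.sum_comm]
    exact Finset.sum_congr rfl fun c _ => Finset.sum_congr rfl fun d _ => by
      rw [hK, hG, neg_mul]
  simp only [Finset.sum_neg_distrib] at h
  linear_combination (1 / 2 : R) * h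

theorem sum_smul_quartic_rotate_right (hψ : ∀ a b, ψ a * ψ b + ψ b * ψ a = G a b • 1)
    (hG : ∀ a b, G a b = G b a) (K : κ → κ → κ → κ → R)
    (hK_anti : ∀ a b c d, K a b d c = -K a b c d) :
    ∑ a, ∑ b, ∑ c, ∑ d, K a b c d • (ψ a * ψ d * ψ b * ψ c)
      = ∑ a, ∑ b, ∑ c, ∑ d, K a b c d • (ψ a * ψ b * ψ c * ψ d)
        + ∑ a, ∑ b, ∑ c, ∑ d, (K a b c d * G b d) • (ψ a * ψ c) := by
  have h : ∀ a b c d, K a b c d • (ψ a * ψ d * ψ b * ψ c) = K a b c d • (ψ a * ψ b * ψ c * ψ d)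
      + (K a b c d * G b d) • (ψ a * ψ c) - (K a b c d * G c d) • (ψ a * ψ b) :=
    fun a b c d => by
      have t := congrArg (ψ a * ·) (mul_mul_eq_mul_mul_add hψ d b c)
      simp only [mul_add, mul_sub, mul_smul_comm, ← mul_assoc] at t
      rw [t, hG d, hG d, smul_sub, smul_add, smul_smul, smul_smul]
  have htrace : ∑ a, ∑ b, ∑ c, ∑ d, (K a b c d * G c d) • (ψ a * ψ b) = 0 := by
    simp only [← Finset.sum_smul,
      sum_antisymm_mul_symm_eq_zero _ _ (fun c d => hK_anti _ _ c d) hG, zero_smul,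
      Finset.sum_const_zero]
  simp only [h, Finset.sum_add_distrib, Finset.sum_sub_distrib, htrace, sub_zero]

theorem sum_smul_quartic (hψ : ∀ a b, ψ a * ψ b + ψ b * ψ a = G a b • 1)
    (hG : ∀ a b, G a b = G b a) (K : κ → κ → κ → κ → R)
    (hK_anti : ∀ a b c d, K a b d c = -K a b c d) (hK_pair : ∀ a b c d, K c d a b = K a b c d)
    (hK_bianchi : ∀ a b c d, K a b c d + K a c d b + K a d b c = 0) :
    ∑ a, ∑ b, ∑ c, ∑ d, K a b c d •
        (ψ c * ψ d * ψ a * ψ b + ψ a * ψ c * ψ d * ψ b + ψ a * ψ b * ψ c * ψ d)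
      = (-(1 / 2 : R) * ∑ a, ∑ b, ∑ c, ∑ d, K a b c d * G a c * G b d) • 1 := by
  have hleft := sum_smul_quartic_rotate_left hψ K hK_anti
  have hright := sum_smul_quartic_rotate_right hψ hG K hK_anti
  rw [sum_ricci_smul_mul hψ hG K hK_pair] at hleft hright
  have hpair : ∑ a, ∑ b, ∑ c, ∑ d, K a b c d • (ψ c * ψ d * ψ a * ψ b)
      = ∑ a, ∑ b, ∑ c, ∑ d, K a b c d • (ψ a * ψ b * ψ c * ψ d) := by
    rw [sum_swap_pairs]
    simp only [hK_pair]
  have hrot : ∀ F : κ → κ → κ → κ → A,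
      ∑ a, ∑ b, ∑ c, ∑ d, F a b c d = ∑ a, ∑ b, ∑ c, ∑ d, F a c d b := fun F =>
    Finset.sum_congr rfl fun a _ => sum_rotate₃ (F a)
  have hbianchi : ∑ a, ∑ b, ∑ c, ∑ d, (K a b c d + K a c d b + K a d b c) •
      (ψ a * ψ b * ψ c * ψ d) = 0 := by
    simp only [hK_bianchi, zero_smul, Finset.sum_const_zero]
  simp only [add_smul, Finset.sum_add_distrib] at hbianchi
  rw [← hrot fun a b c d => K a b c d • (ψ a * ψ d * ψ b * ψ c),
    hrot fun a b c d => K a d b c • (ψ a * ψ b * ψ c * ψ d), hleft, hright] at hbianchi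
  simp only [smul_add, Finset.sum_add_distrib, hpair, hleft]
  linear_combination (norm := module) hbianchi

end AnticommutingFamily

theorem CliffordAlgebra.ι_mul_ι_add_swap_of_eq_half {R M : Type*} [Field R] [CharZero R]
    [AddCommGroup M] [Module R M] {Q : QuadraticForm R M} {B : M →ₗ[R] M →ₗ[R] R}
    (hB : ∀ x y, B x y = B y x) (hQ : ∀ v, Q v = (1 / 2 : R) * B v v) (x y : M) :
    ι Q x * ι Q y + ι Q y * ι Q x = B x y • 1 := by
  rw [ι_mul_ι_add_swap, QuadraticMap.polar, hQ, hQ, hQ, Algebra.algebraMap_eq_smul_one]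
  congr 1
  simp only [map_add, LinearMap.add_apply, hB y x]
  ring

section TensorSquare

variable {R κ U A : Type*} [CommRing R] [Fintype κ] [Ring U] [Algebra R U] [Ring A] [Algebra R A]

theorem sq_sum_tmul_sub_one_tmul (u : κ → U) (ψ : κ → A) (c : A) :
    (∑ a, u a ⊗ₜ[R] ψ a - 1 ⊗ₜ[R] c) ^ 2
      = ∑ a, ∑ b, (u a * u b) ⊗ₜ[R] (ψ a * ψ b) - ∑ a, u a ⊗ₜ[R] (ψ a * c + c * ψ a)
        + 1 ⊗ₜ[R] (c * c) := by
  rw [pow_two, sub_mul, mul_sub, mul_sub, Finset.sum_mul_sum]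
  simp only [Finset.sum_mul, Finset.mul_sum, Algebra.TensorProduct.tmul_mul_tmul, one_mul, mul_one,
    TensorProduct.tmul_add, Finset.sum_add_distrib]
  abel

theorem two_smul_sum_tmul_mul {ψ : κ → A} {G : κ → κ → R}
    (hψ : ∀ a b, ψ a * ψ b + ψ b * ψ a = G a b • 1) (u : κ → U) :
    (2 : R) • ∑ a, ∑ b, (u a * u b) ⊗ₜ[R] (ψ a * ψ b)
      = ∑ a, ∑ b, G a b • ((u a * u b) ⊗ₜ[R] (1 : A))
        + ∑ a, ∑ b, (u a * u b - u b * u a) ⊗ₜ[R] (ψ a * ψ b) := by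
  have hswap : ∑ a, ∑ b, (u a * u b) ⊗ₜ[R] (ψ b * ψ a)
      = ∑ a, ∑ b, (u b * u a) ⊗ₜ[R] (ψ a * ψ b) := Finset.sum_comm
  have h : ∀ a b, (u a * u b) ⊗ₜ[R] (ψ a * ψ b)
      = G a b • ((u a * u b) ⊗ₜ[R] (1 : A)) - (u a * u b) ⊗ₜ[R] (ψ b * ψ a) := fun a b => by
    rw [eq_sub_of_add_eq (hψ a b), TensorProduct.tmul_sub, TensorProduct.tmul_smul]
  calc (2 : R) • ∑ a, ∑ b, (u a * u b) ⊗ₜ[R] (ψ a * ψ b)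
      = ∑ a, ∑ b, (u a * u b) ⊗ₜ[R] (ψ a * ψ b)
        + ∑ a, ∑ b, (G a b • ((u a * u b) ⊗ₜ[R] (1 : A)) - (u a * u b) ⊗ₜ[R] (ψ b * ψ a)) := by
        rw [two_smul]
        simp only [← h]
    _ = _ := by
        simp only [Finset.sum_sub_distrib, hswap, TensorProduct.sub_tmul]
        abel

end TensorSquare

section QuadraticLieAlgebra

variable {R g κ A : Type*} [CommRing R] [LieRing g] [LieAlgebra R g] [Fintype κ]
  [Ring A] [Algebra R A] {B : g →ₗ[R] g →ₗ[R] R} {e : Module.Basis κ R g} {e' : κ → g}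
  {ψ : κ → A}

theorem invariant_form_lie_rotate (hB : ∀ x y, B x y = B y x)
    (hB_inv : ∀ x y z, B ⁅x, y⁆ z = B x ⁅y, z⁆) (x y z : g) : B y ⁅z, x⁆ = B x ⁅y, z⁆ := by
  rw [← hB_inv, hB, ← hB_inv, hB]

theorem invariant_form_lie_swap (hB_inv : ∀ x y z, B ⁅x, y⁆ z = B x ⁅y, z⁆) (x y z : g) :
    B y ⁅x, z⁆ = -B x ⁅y, z⁆ := by
  rw [← hB_inv, ← hB_inv, ← lie_skew, map_neg, LinearMap.neg_apply]

theorem sum_form_lie_mul_dual_mul_dual [DecidableEq κ]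
    (h_dual : ∀ a b, B (e a) (e' b) = if a = b then 1 else 0) :
    ∑ a, ∑ b, ∑ c, ∑ d, B ⁅e a, e b⁆ ⁅e c, e d⁆ * B (e' a) (e' c) * B (e' b) (e' d)
      = ∑ a, ∑ b, B ⁅e a, e b⁆ ⁅e' a, e' b⁆ := by
  have he' : ∀ a, e' a = ∑ c, B (e' a) (e' c) • e c := fun a =>
    map_eq_sum_dual_smul h_dual LinearMap.id (e' a)
  refine Finset.sum_congr rfl fun a _ => Finset.sum_congr rfl fun b _ => ?_
  conv_rhs => rw [he' a, he' b]
  simp only [sum_lie, lie_sum, smul_lie, lie_smul, map_sum, map_smul, smul_eq_mul, Finset.mul_sum]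
  rw [Finset.sum_comm]
  refine Finset.sum_congr rfl fun c _ => Finset.sum_congr rfl fun d _ => ?_
  ring

theorem sum_structureConstants_mul_dual [DecidableEq κ] (hB : ∀ x y, B x y = B y x)
    (h_dual : ∀ a b, B (e a) (e' b) = if a = b then 1 else 0) :
    ∑ a, ∑ b, ∑ c, B (e a) ⁅e b, e c⁆ * B (e' a) ⁅e' b, e' c⁆
      = ∑ a, ∑ b, B ⁅e a, e b⁆ ⁅e' a, e' b⁆ := by
  rw [Finset.sum_comm]
  refine Finset.sum_congr rfl fun b _ => ?_
  rw [Finset.sum_comm]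
  refine Finset.sum_congr rfl fun c _ => ?_
  simp only [hB (e _), sum_mul_dual hB h_dual]

-- For `ψ = ι ∘ e'` this is, up to normalisation, the image of `ad x` under `𝔰𝔬(g) → Cl(g)`.
variable (B e ψ) in
noncomputable def adQuadratic : g →ₗ[R] A :=
  ∑ p, ∑ q, (B.flip ⁅e p, e q⁆).smulRight (ψ p * ψ q)

@[simp]
theorem adQuadratic_apply (x : g) :
    adQuadratic B e ψ x = ∑ p, ∑ q, B x ⁅e p, e q⁆ • (ψ p * ψ q) := by
  simp [adQuadratic]

theorem anticomm_cubicElement [DecidableEq κ] (hB : ∀ x y, B x y = B y x)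
    (hB_inv : ∀ x y z, B ⁅x, y⁆ z = B x ⁅y, z⁆)
    (h_dual : ∀ a b, B (e a) (e' b) = if a = b then 1 else 0)
    (hψ : ∀ a b, ψ a * ψ b + ψ b * ψ a = B (e' a) (e' b) • 1) (d : κ) :
    ψ d * (∑ a, ∑ b, ∑ c, B (e a) ⁅e b, e c⁆ • (ψ a * ψ b * ψ c))
        + (∑ a, ∑ b, ∑ c, B (e a) ⁅e b, e c⁆ • (ψ a * ψ b * ψ c)) * ψ d
      = (3 : R) • adQuadratic B e ψ (e' d) := by
  rw [anticomm_sum_cubic hψ (fun a b c => B (e a) ⁅e b, e c⁆)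
    (fun _ _ _ => invariant_form_lie_swap hB_inv _ _ _)
    (fun _ _ _ => invariant_form_lie_rotate hB hB_inv _ _ _), adQuadratic_apply]
  simp only [← smul_eq_mul, ← B.flip_apply (e _), ← map_eq_sum_dual_smul h_dual]
  rfl

theorem sum_smul_adQuadratic_dual [DecidableEq κ] (hB : ∀ x y, B x y = B y x)
    (h_dual : ∀ a b, B (e a) (e' b) = if a = b then 1 else 0) (x : g) :
    ∑ a, B (e a) x • adQuadratic B e ψ (e' a) = adQuadratic B e ψ x := by
  simp only [hB (e _) x, ← map_eq_sum_smul_dual hB h_dual]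

theorem sum_smul_adQuadratic_mul_quartic [DecidableEq κ] (hB : ∀ x y, B x y = B y x)
    (h_dual : ∀ a b, B (e a) (e' b) = if a = b then 1 else 0) :
    ∑ a, ∑ b, ∑ c, B (e a) ⁅e b, e c⁆ •
        (adQuadratic B e ψ (e' a) * ψ b * ψ c + ψ b * adQuadratic B e ψ (e' a) * ψ c
          + ψ b * ψ c * adQuadratic B e ψ (e' a))
      = ∑ b, ∑ c, ∑ p, ∑ q, B ⁅e b, e c⁆ ⁅e p, e q⁆ •
        (ψ p * ψ q * ψ b * ψ c + ψ b * ψ p * ψ q * ψ c + ψ b * ψ c * ψ p * ψ q) := by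
  rw [Finset.sum_comm]
  refine Finset.sum_congr rfl fun b _ => ?_
  rw [Finset.sum_comm]
  refine Finset.sum_congr rfl fun c _ => ?_
  calc _ = (∑ a, B (e a) ⁅e b, e c⁆ • adQuadratic B e ψ (e' a)) * ψ b * ψ c
        + ψ b * (∑ a, B (e a) ⁅e b, e c⁆ • adQuadratic B e ψ (e' a)) * ψ c
        + ψ b * ψ c * (∑ a, B (e a) ⁅e b, e c⁆ • adQuadratic B e ψ (e' a)) := by
        simp only [Finset.sum_mul, Finset.mul_sum, smul_mul_assoc, mul_smul_comm, smul_add,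
          Finset.sum_add_distrib]
    _ = _ := by
        rw [sum_smul_adQuadratic_dual hB h_dual, adQuadratic_apply]
        simp only [Finset.sum_mul, Finset.mul_sum, smul_mul_assoc, mul_smul_comm,
          ← Finset.sum_add_distrib, ← smul_add, mul_assoc]

theorem sum_tmul_adQuadratic_dual {U : Type*} [Ring U] [Algebra R U] [DecidableEq κ]
    (hB : ∀ x y, B x y = B y x) (h_dual : ∀ a b, B (e a) (e' b) = if a = b then 1 else 0)
    (ρ : g →ₗ[R] U) :
    ∑ a, ρ (e a) ⊗ₜ[R] adQuadratic B e ψ (e' a) = ∑ p, ∑ q, ρ ⁅e p, e q⁆ ⊗ₜ[R] (ψ p * ψ q) := by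
  simp only [adQuadratic_apply, TensorProduct.tmul_sum, TensorProduct.tmul_smul]
  rw [Finset.sum_comm]
  refine Finset.sum_congr rfl fun p _ => ?_
  rw [Finset.sum_comm]
  refine Finset.sum_congr rfl fun q _ => ?_
  rw [map_eq_sum_dual_smul h_dual ρ, TensorProduct.sum_tmul]
  simp only [TensorProduct.smul_tmul', hB (e' _)]

end QuadraticLieAlgebra

section CubicDirac

variable {R g κ U A : Type*} [Field R] [CharZero R] [LieRing g] [LieAlgebra R g]
  [Fintype κ] [DecidableEq κ] [Ring U] [Algebra R U] [Ring A] [Algebra R A]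
  {B : g →ₗ[R] g →ₗ[R] R} {e : Module.Basis κ R g} {e' : κ → g} {ψ : κ → A}

theorem cubicElement_mul_self (hB : ∀ x y, B x y = B y x)
    (hB_inv : ∀ x y z, B ⁅x, y⁆ z = B x ⁅y, z⁆)
    (h_dual : ∀ a b, B (e a) (e' b) = if a = b then 1 else 0)
    (hψ : ∀ a b, ψ a * ψ b + ψ b * ψ a = B (e' a) (e' b) • 1) :
    (∑ a, ∑ b, ∑ c, B (e a) ⁅e b, e c⁆ • (ψ a * ψ b * ψ c))
        * (∑ a, ∑ b, ∑ c, B (e a) ⁅e b, e c⁆ • (ψ a * ψ b * ψ c))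
      = (-(3 / 4 : R) * ∑ a, ∑ b, ∑ c, B (e a) ⁅e b, e c⁆ * B (e' a) ⁅e' b, e' c⁆) • 1 := by
  have h2 := two_smul_cubic_mul_self (fun a b c => B (e a) ⁅e b, e c⁆)
    (fun _ _ _ => invariant_form_lie_swap hB_inv _ _ _)
    (fun _ _ _ => invariant_form_lie_rotate hB hB_inv _ _ _) (fun a => adQuadratic B e ψ (e' a))
    (anticomm_cubicElement hB hB_inv h_dual hψ)
  rw [sum_smul_adQuadratic_mul_quartic hB h_dual, sum_smul_quartic hψ (fun a b => hB _ _) _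
    (fun a b c d => by rw [← lie_skew (e d), map_neg]) (fun a b c d => hB _ _)
    (fun a b c d => by
      rw [hB_inv, hB_inv, hB_inv, ← map_add, ← map_add, lie_jacobi, map_zero]),
    sum_form_lie_mul_dual_mul_dual h_dual, ← sum_structureConstants_mul_dual hB h_dual] at h2
  linear_combination (norm := module) (1 / 2 : R) • h2

theorem sq_cubicDirac (hB : ∀ x y, B x y = B y x)
    (h_dual : ∀ a b, B (e a) (e' b) = if a = b then 1 else 0)
    (hψ : ∀ a b, ψ a * ψ b + ψ b * ψ a = B (e' a) (e' b) • 1)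
    (ρ : g →ₗ[R] U) (hρ : ∀ x y, ρ ⁅x, y⁆ = ρ x * ρ y - ρ y * ρ x) (c : A)
    (hc : ∀ a, ψ a * c + c * ψ a = (1 / 2 : R) • adQuadratic B e ψ (e' a)) :
    (∑ a, ρ (e a) ⊗ₜ[R] ψ a - 1 ⊗ₜ[R] c) ^ 2
      = (1 / 2 : R) • ∑ a, (ρ (e a) * ρ (e' a)) ⊗ₜ[R] (1 : A) + 1 ⊗ₜ[R] (c * c) := by
  have hcasimir : ∀ a, ∑ b, B (e' a) (e' b) • ((ρ (e a) * ρ (e b)) ⊗ₜ[R] (1 : A))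
      = (ρ (e a) * ρ (e' a)) ⊗ₜ[R] (1 : A) := fun a => by
    rw [map_eq_sum_dual_smul h_dual ρ (e' a), Finset.mul_sum, TensorProduct.sum_tmul]
    simp only [mul_smul_comm, TensorProduct.smul_tmul']
  have hsq := two_smul_sum_tmul_mul hψ fun a => ρ (e a)
  simp only [hcasimir, ← hρ] at hsq
  rw [← sum_tmul_adQuadratic_dual hB h_dual] at hsq
  rw [sq_sum_tmul_sub_one_tmul]
  simp only [hc, TensorProduct.tmul_smul, ← Finset.smul_sum]
  linear_combination (norm := module) (1 / 2 : R) • hsq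

end CubicDirac

theorem cubic_dirac_operator_square_general
    {g : Type*} [LieRing g] [LieAlgebra ℝ g]
    -- the invariant, non-degenerate, symmetric bilinear form B
    (B : g →ₗ[ℝ] g →ₗ[ℝ] ℝ)
    (hB_symm : ∀ x y : g, B x y = B y x)
    (hB_inv : ∀ x y z : g, B ⁅x, y⁆ z = B x ⁅y, z⁆)
    -- a basis (e_a) and its B-dual basis (e^a)
    {κ : Type*} [Fintype κ] [DecidableEq κ] (e : Module.Basis κ ℝ g) (e' : κ → g)
    (h_dual : ∀ a b : κ, B (e a) (e' b) = if a = b then 1 else 0)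
    -- the Clifford algebra of the quadratic form Q(v) = (1/2)·B(v,v)
    (Q : QuadraticForm ℝ g) (hQ : ∀ v : g, Q v = (1 / 2 : ℝ) * B v v)
    -- the structure constants f_{abc} and f^{abc}
    (f : κ → κ → κ → ℝ) (hf : ∀ a b c : κ, f a b c = B (e a) ⁅e b, e c⁆)
    (f' : κ → κ → κ → ℝ) (hf' : ∀ a b c : κ, f' a b c = B (e' a) ⁅e' b, e' c⁆)
    -- the cubic element C
    (C : CliffordAlgebra Q)
    (hC : C = (1 / 6 : ℝ) •
      ∑ a : κ, ∑ b : κ, ∑ c : κ, f a b c • (ι Q (e' a) * ι Q (e' b) * ι Q (e' c)))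
    -- the cubic Dirac operator D in W(g) = U(g) ⊗ Cl(g)
    (D : UniversalEnvelopingAlgebra ℝ g ⊗[ℝ] CliffordAlgebra Q)
    (hD : D = (∑ a : κ,
        (UniversalEnvelopingAlgebra.ι ℝ (e a)) ⊗ₜ[ℝ] (ι Q (e' a)))
      - (1 : UniversalEnvelopingAlgebra ℝ g) ⊗ₜ[ℝ] C) :
    D ^ 2 = (1 / 2 : ℝ) • (∑ a : κ,
        (UniversalEnvelopingAlgebra.ι ℝ (e a) * UniversalEnvelopingAlgebra.ι ℝ (e' a))
          ⊗ₜ[ℝ] (1 : CliffordAlgebra Q))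
      - ((1 / 48 : ℝ) * ∑ a : κ, ∑ b : κ, ∑ c : κ, f a b c * f' a b c) •
        ((1 : UniversalEnvelopingAlgebra ℝ g) ⊗ₜ[ℝ] (1 : CliffordAlgebra Q)) := by
  simp only [hf] at hC
  simp only [hf, hf']
  have hψ : ∀ a b, ι Q (e' a) * ι Q (e' b) + ι Q (e' b) * ι Q (e' a) = B (e' a) (e' b) • 1 :=
    fun a b => ι_mul_ι_add_swap_of_eq_half hB_symm hQ _ _
  have hanti : ∀ a, ι Q (e' a) * C + C * ι Q (e' a)
      = (1 / 2 : ℝ) • adQuadratic B e (fun a => ι Q (e' a)) (e' a) := fun a => by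
    rw [hC, mul_smul_comm, smul_mul_assoc, ← smul_add,
      anticomm_cubicElement hB_symm hB_inv h_dual hψ, smul_smul]
    norm_num
  have hsq : C * C = (-(1 / 48 : ℝ) * ∑ a, ∑ b, ∑ c,
      B (e a) ⁅e b, e c⁆ * B (e' a) ⁅e' b, e' c⁆) • 1 := by
    rw [hC, smul_mul_smul_comm, cubicElement_mul_self hB_symm hB_inv h_dual hψ, smul_smul]
    ring_nf
  -- `ι` is a Lie map for the commutator bracket, which is not a global instance on `U(g)`.
  let _ := LieRing.ofAssociativeRing (A := UniversalEnvelopingAlgebra ℝ g)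
  have hD2 := sq_cubicDirac hB_symm h_dual hψ (UniversalEnvelopingAlgebra.ι ℝ).toLinearMap
    (UniversalEnvelopingAlgebra.ι ℝ).map_lie C hanti
  simp only [LieHom.coe_toLinearMap] at hD2
  rw [hD, hD2, hsq, TensorProduct.tmul_smul]
  module

theorem cubic_dirac_operator_square
    {g : Type*} [LieRing g] [LieAlgebra ℝ g] [FiniteDimensional ℝ g]
    -- the invariant, non-degenerate, symmetric bilinear form B
    (B : g →ₗ[ℝ] g →ₗ[ℝ] ℝ)
    (hB_symm : ∀ x y : g, B x y = B y x)
    (hB_nondeg : ∀ x : g, (∀ y : g, B x y = 0) → x = 0)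
    (hB_inv : ∀ x y z : g, B ⁅x, y⁆ z = B x ⁅y, z⁆)
    -- a basis (e_a) and its B-dual basis (e^a)
    {κ : Type*} [Fintype κ] [DecidableEq κ] (e : Module.Basis κ ℝ g) (e' : κ → g)
    (h_dual : ∀ a b : κ, B (e a) (e' b) = if a = b then 1 else 0)
    -- the Clifford algebra of the quadratic form Q(v) = (1/2)·B(v,v)
    (Q : QuadraticForm ℝ g) (hQ : ∀ v : g, Q v = (1 / 2 : ℝ) * B v v)
    -- the structure constants f_{abc} and f^{abc}
    (f : κ → κ → κ → ℝ) (hf : ∀ a b c : κ, f a b c = B (e a) ⁅e b, e c⁆)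
    (f' : κ → κ → κ → ℝ) (hf' : ∀ a b c : κ, f' a b c = B (e' a) ⁅e' b, e' c⁆)
    -- the cubic element C
    (C : CliffordAlgebra Q)
    (hC : C = (1 / 6 : ℝ) •
      ∑ a : κ, ∑ b : κ, ∑ c : κ, f a b c • (ι Q (e' a) * ι Q (e' b) * ι Q (e' c)))
    -- the cubic Dirac operator D in W(g) = U(g) ⊗ Cl(g)
    (D : UniversalEnvelopingAlgebra ℝ g ⊗[ℝ] CliffordAlgebra Q)
    (hD : D = (∑ a : κ,
        (UniversalEnvelopingAlgebra.ι ℝ (e a)) ⊗ₜ[ℝ] (ι Q (e' a)))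
      - (1 : UniversalEnvelopingAlgebra ℝ g) ⊗ₜ[ℝ] C) :
    D ^ 2 = (1 / 2 : ℝ) • (∑ a : κ,
        (UniversalEnvelopingAlgebra.ι ℝ (e a) * UniversalEnvelopingAlgebra.ι ℝ (e' a))
          ⊗ₜ[ℝ] (1 : CliffordAlgebra Q))
      - ((1 / 48 : ℝ) * ∑ a : κ, ∑ b : κ, ∑ c : κ, f a b c * f' a b c) •
        ((1 : UniversalEnvelopingAlgebra ℝ g) ⊗ₜ[ℝ] (1 : CliffordAlgebra Q)) :=
  cubic_dirac_operator_square_general B hB_symm hB_inv e e' h_dual Q hQ f hf f' hf' C hC D hD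
end
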